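/- Let ρ, σ, ρ₁, σ₁ ∈ ℝ and κ ∈ ℝ \ {0}, and set R(t) = t² + ρt + σ. Let y be three times differentiable on an open interval I ⊆ ℝ with y'(x) ≠ 0, y(x) ∉ {0,1}, R(y(x)) ≠ 0, and (y'(x))²·R(y(x)) = 4κ·y(x)²·(1−y(x))² for all x ∈ I. Then for every x ∈ I (writing y = y(x)): (y''/(2y'))² − (d/dx)(y''/(2y')) − κ·(y² + (ρ+ρ₁)y + σ+σ₁)/R(y) = (κ·y²(1−y)²/R(y))·[ 1/(y²(1−y)²) + 2/R(y) + (1−2y)(2y+ρ)/(y(1−y)R(y)) − 5(2y+ρ)²/(4R(y)²) ] − κ·(y² + (ρ+ρ₁)y + σ+σ₁)/R(y). -/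

import Mathlib

/-- The quadratic `R(t) = t² + ρt + σ` of Iwata's first case. -/
def iwataR (ρ σ : ℝ) : ℝ → ℝ := fun t => t ^ 2 + ρ * t + σ

/-!
Differentiating the first integral `y'² R(y) = P(y)` once (and cancelling `y' ≠ 0`) and then once
more expresses `y''` and `y'''` through `y'`, `y` and the derivatives of `R` and `P`. Substituting
these into `(y''/(2y'))² - (y''/(2y'))' = (3y''² - 2y'y''')/(4y'²)` and eliminating `y'²` with the
first integral itself turns the claim into a polynomial identity in `y`.
-/

open Set Filter

theorem HasDerivAt.eq_of_eqOn {f g : ℝ → ℝ} {f' g' x : ℝ} {I : Set ℝ} (hI : IsOpen I)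
    (hfg : EqOn f g I) (hx : x ∈ I) (hf : HasDerivAt f f' x) (hg : HasDerivAt g g' x) :
    f' = g' :=
  hf.unique (hg.congr_of_eventuallyEq (eventuallyEq_of_mem (hI.mem_nhds hx) hfg))

section FirstIntegral

variable {y R P R' P' R'' P'' : ℝ → ℝ} {I : Set ℝ}

theorem eqOn_deriv_of_eqOn_sq_deriv_mul_comp (hI : IsOpen I)
    (hR : ∀ t, HasDerivAt R (R' t) t) (hP : ∀ t, HasDerivAt P (P' t) t)
    (hy : ∀ x ∈ I, DifferentiableAt ℝ y x) (hy' : ∀ x ∈ I, DifferentiableAt ℝ (deriv y) x)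
    (hy0 : ∀ x ∈ I, deriv y x ≠ 0)
    (heq : EqOn (fun x => deriv y x ^ 2 * R (y x)) (fun x => P (y x)) I) :
    EqOn (fun x => 2 * deriv (deriv y) x * R (y x) + deriv y x ^ 2 * R' (y x))
      (fun x => P' (y x)) I := by
  intro x hx
  have hY := (hy x hx).hasDerivAt
  have h := HasDerivAt.eq_of_eqOn hI heq hx
    (((hy' x hx).hasDerivAt.pow 2).mul ((hR _).comp x hY)) ((hP _).comp x hY)
  apply mul_left_cancel₀ (hy0 x hx)
  simp only [Pi.pow_apply] at h ⊢
  linear_combination h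

theorem eqOn_deriv_deriv_of_eqOn_deriv (hI : IsOpen I)
    (hR : ∀ t, HasDerivAt R (R' t) t) (hR' : ∀ t, HasDerivAt R' (R'' t) t)
    (hP' : ∀ t, HasDerivAt P' (P'' t) t)
    (hy : ∀ x ∈ I, DifferentiableAt ℝ y x) (hy' : ∀ x ∈ I, DifferentiableAt ℝ (deriv y) x)
    (hy'' : ∀ x ∈ I, DifferentiableAt ℝ (deriv (deriv y)) x)
    (heq : EqOn (fun x => 2 * deriv (deriv y) x * R (y x) + deriv y x ^ 2 * R' (y x))
      (fun x => P' (y x)) I) :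
    EqOn (fun x => 2 * deriv (deriv (deriv y)) x * R (y x)
        + 4 * deriv y x * deriv (deriv y) x * R' (y x) + deriv y x ^ 3 * R'' (y x))
      (fun x => deriv y x * P'' (y x)) I := by
  intro x hx
  have hY := (hy x hx).hasDerivAt
  have h := HasDerivAt.eq_of_eqOn hI heq hx
    ((((hy'' x hx).hasDerivAt.const_mul 2).mul ((hR _).comp x hY)).add
      (((hy' x hx).hasDerivAt.pow 2).mul ((hR' _).comp x hY))) ((hP' _).comp x hY)
  simp only [Pi.pow_apply, Function.comp_apply] at h ⊢
  linear_combination h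

end FirstIntegral

theorem hasDerivAt_iwataR (ρ σ t : ℝ) : HasDerivAt (iwataR ρ σ) (2 * t + ρ) t :=
  (((hasDerivAt_pow 2 t).add ((hasDerivAt_id' t).const_mul ρ)).add_const σ).congr_deriv (by ring)

theorem iwataR_potential_eq {ρ σ κ t p q r : ℝ} (hp : p ≠ 0) (hR : iwataR ρ σ t ≠ 0)
    (h1 : p ^ 2 * iwataR ρ σ t = 4 * κ * t ^ 2 * (1 - t) ^ 2)
    (h2 : 2 * q * iwataR ρ σ t + p ^ 2 * (2 * t + ρ) = 8 * κ * t * (1 - t) * (1 - 2 * t))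
    (h3 : 2 * r * iwataR ρ σ t + 4 * p * q * (2 * t + ρ) + p ^ 3 * 2
      = p * (8 * κ * (6 * t ^ 2 - 6 * t + 1))) :
    (q / (2 * p)) ^ 2 - (r * (2 * p) - q * (2 * q)) / (2 * p) ^ 2
      = (κ * t ^ 2 * (1 - t) ^ 2 / iwataR ρ σ t) *
          (1 / (t ^ 2 * (1 - t) ^ 2) + 2 / iwataR ρ σ t
            + (1 - 2 * t) * (2 * t + ρ) / (t * (1 - t) * iwataR ρ σ t)
            - 5 * (2 * t + ρ) ^ 2 / (4 * iwataR ρ σ t ^ 2)) := by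
  set R := iwataR ρ σ t
  have hκt : κ * t ^ 2 * (1 - t) ^ 2 ≠ 0 := by
    have : p ^ 2 * R ≠ 0 := by positivity
    rw [h1] at this
    contrapose! this
    linear_combination 4 * this
  have ht0 : t ≠ 0 := by rintro rfl; simp at hκt
  have ht1 : 1 - t ≠ 0 := by intro h; simp [h] at hκt
  field_simp
  -- `h3` eliminates `r`, then `h2` eliminates `q` and `h1` eliminates `p ^ 2`.
  linear_combination -4 * R ^ 2 * p * h3
    + (6 * q * R ^ 2 + 24 * κ * t * (1 - t) * (1 - 2 * t) * R + 5 * p ^ 2 * (2 * t + ρ) * R) * h2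
    + (-5 * p ^ 2 * (2 * t + ρ) ^ 2 + 8 * p ^ 2 * R - 32 * κ * (6 * t ^ 2 - 6 * t + 1) * R
      - 16 * κ * R) * h1

theorem stmt_2 (ρ σ ρ₁ σ₁ κ : ℝ) (y : ℝ → ℝ) (I : Set ℝ) (hI : IsOpen I)
    (hy : ∀ x ∈ I, DifferentiableAt ℝ y x)
    (hy' : ∀ x ∈ I, DifferentiableAt ℝ (deriv y) x)
    (hy'' : ∀ x ∈ I, DifferentiableAt ℝ (deriv (deriv y)) x)
    (hy0 : ∀ x ∈ I, deriv y x ≠ 0)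
    (hR : ∀ x ∈ I, iwataR ρ σ (y x) ≠ 0)
    (heq : ∀ x ∈ I, (deriv y x) ^ 2 * iwataR ρ σ (y x)
      = 4 * κ * (y x) ^ 2 * (1 - y x) ^ 2) :
    ∀ x ∈ I,
      (deriv (deriv y) x / (2 * deriv y x)) ^ 2
          - deriv (fun t => deriv (deriv y) t / (2 * deriv y t)) x
          - κ * ((y x) ^ 2 + (ρ + ρ₁) * y x + σ + σ₁) / iwataR ρ σ (y x)
        = (κ * (y x) ^ 2 * (1 - y x) ^ 2 / iwataR ρ σ (y x)) *
            (1 / ((y x) ^ 2 * (1 - y x) ^ 2) + 2 / iwataR ρ σ (y x)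
              + (1 - 2 * y x) * (2 * y x + ρ) / (y x * (1 - y x) * iwataR ρ σ (y x))
              - 5 * (2 * y x + ρ) ^ 2 / (4 * (iwataR ρ σ (y x)) ^ 2))
          - κ * ((y x) ^ 2 + (ρ + ρ₁) * y x + σ + σ₁) / iwataR ρ σ (y x) := by
  have hP (t : ℝ) : HasDerivAt (fun t => 4 * κ * t ^ 2 * (1 - t) ^ 2)
      (8 * κ * t * (1 - t) * (1 - 2 * t)) t :=
    (((hasDerivAt_pow 2 t).const_mul (4 * κ)).mul (((hasDerivAt_id' t).const_sub 1).pow 2))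
      |>.congr_deriv (by simp only [Pi.pow_apply]; ring)
  have hP' (t : ℝ) : HasDerivAt (fun t => 8 * κ * t * (1 - t) * (1 - 2 * t))
      (8 * κ * (6 * t ^ 2 - 6 * t + 1)) t :=
    ((((hasDerivAt_id' t).const_mul (8 * κ)).mul ((hasDerivAt_id' t).const_sub 1)).mul
      (((hasDerivAt_id' t).const_mul 2).const_sub 1)).congr_deriv (by simp only [Pi.mul_apply]; ring)
  have hR' (t : ℝ) : HasDerivAt (fun t => 2 * t + ρ) 2 t :=
    (((hasDerivAt_id' t).const_mul 2).add_const ρ).congr_deriv (by ring)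
  have h2 := eqOn_deriv_of_eqOn_sq_deriv_mul_comp hI (hasDerivAt_iwataR ρ σ) hP hy hy' hy0 heq
  have h3 := eqOn_deriv_deriv_of_eqOn_deriv hI (hasDerivAt_iwataR ρ σ) hR' hP' hy hy' hy'' h2
  intro x hx
  have hquot : HasDerivAt (fun t => deriv (deriv y) t / (2 * deriv y t)) _ x :=
    (hy'' x hx).hasDerivAt.div ((hy' x hx).hasDerivAt.const_mul 2)
      (mul_ne_zero two_ne_zero (hy0 x hx))
  rw [hquot.deriv, sub_left_inj]
  exact iwataR_potential_eq (hy0 x hx) (hR x hx) (heq x hx) (h2 hx) (h3 hx)
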